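/- arXiv:2003.04520 — 3 statements merged into one kernel-verified Lean document; each statement's English description precedes it below -/
import Mathlib

section
/- Let H be a positive semidefinite n×n block matrix with k×k blocks. Then (det(tr₁H)/n^k)^n ≥ det H, where tr₁H = Σᵢ H_{i,i}. -/
/-!
If `H` is singular there is nothing to prove, since `det tr₁ H ≥ 0`. Otherwise
`tr₁ H = ∑ᵢ Eᵢᴴ H Eᵢ` (with `Eᵢ` the inclusion of the `i`-th block) is positive definite, so
`Rᴴ (tr₁ H) R = 1` for some `R`. Congruence by `1 ⊗ R` turns `H` into a positive semidefinite
`H'` with `tr₁ H' = 1`, hence `tr H' = k`, and AM-GM on the `nk` eigenvalues of `H'` gives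
`det H' ≤ n^(-nk)`. Finally `det H' = |det R|^(2n) det H = det H / (det tr₁ H)^n`.
-/

open Matrix BigOperators ComplexOrder

/-- First partial trace: sum of the diagonal blocks. -/
noncomputable def ptrace1 {n k : ℕ} (H : Matrix (Fin n × Fin k) (Fin n × Fin k) ℂ) :
    Matrix (Fin k) (Fin k) ℂ :=
  Matrix.of fun l m => ∑ i : Fin n, H (i, l) (i, m)

open Kronecker

theorem Real.prod_le_sum_div_card_pow {ι : Type*} (s : Finset ι) {f : ι → ℝ}
    (hf : ∀ i ∈ s, 0 ≤ f i) : ∏ i ∈ s, f i ≤ ((∑ i ∈ s, f i) / s.card) ^ s.card := by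
  rcases s.eq_empty_or_nonempty with rfl | hs
  · simp
  have hcard : (s.card : ℝ) ≠ 0 := by exact_mod_cast hs.card_pos.ne'
  have amgm := geom_mean_le_arith_mean_weighted s (fun _ => (s.card : ℝ)⁻¹) f
    (fun _ _ => by positivity) (by simp [hcard]) hf
  calc ∏ i ∈ s, f i = (∏ i ∈ s, f i ^ (s.card : ℝ)⁻¹) ^ s.card := by
        rw [← Finset.prod_pow]
        exact Finset.prod_congr rfl fun i hi =>
          (rpow_inv_natCast_pow (hf i hi) hs.card_pos.ne').symm
    _ ≤ (∑ i ∈ s, (s.card : ℝ)⁻¹ * f i) ^ s.card :=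
        pow_le_pow_left₀ (Finset.prod_nonneg fun i hi => rpow_nonneg (hf i hi) _) amgm _
    _ = ((∑ i ∈ s, f i) / s.card) ^ s.card := by rw [← Finset.mul_sum, inv_mul_eq_div]

namespace Matrix

variable {m 𝕜 : Type*} [Fintype m] [DecidableEq m] [RCLike 𝕜]

theorem PosSemidef.re_det_le_re_trace_div_card_pow {A : Matrix m m 𝕜} (hA : A.PosSemidef) :
    RCLike.re A.det ≤ (RCLike.re A.trace / Fintype.card m) ^ Fintype.card m := by
  rw [hA.1.det_eq_prod_eigenvalues, hA.1.trace_eq_sum_eigenvalues, ← RCLike.ofReal_prod,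
    ← RCLike.ofReal_sum, RCLike.ofReal_re, RCLike.ofReal_re, ← Finset.card_univ]
  exact Real.prod_le_sum_div_card_pow _ fun i _ => hA.eigenvalues_nonneg i

theorem re_det_conjTranspose_mul_mul (A B : Matrix m m 𝕜) :
    RCLike.re (Bᴴ * A * B).det = ‖B.det‖ ^ 2 * RCLike.re A.det := by
  rw [det_mul, det_mul, det_conjTranspose, mul_comm _ B.det, ← mul_assoc, RCLike.star_def,
    RCLike.mul_conj, ← RCLike.ofReal_pow, RCLike.re_ofReal_mul]

theorem PosDef.exists_conjTranspose_mul_mul_eq_one {A : Matrix m m 𝕜} (hA : A.PosDef) :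
    ∃ R : Matrix m m 𝕜, Rᴴ * A * R = 1 := by
  open scoped MatrixOrder in
  obtain ⟨B, rfl⟩ := CStarAlgebra.nonneg_iff_eq_star_mul_self.mp hA.posSemidef.nonneg
  have hB : IsUnit B.det := (isUnit_iff_isUnit_det B).mp (isUnit_of_mul_isUnit_right hA.isUnit)
  refine ⟨B⁻¹, ?_⟩
  rw [star_eq_conjTranspose, Matrix.mul_assoc, Matrix.mul_assoc, mul_nonsing_inv _ hB,
    Matrix.mul_one, ← conjTranspose_mul, mul_nonsing_inv _ hB, conjTranspose_one]

end Matrix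

section PartialTrace

variable {n k : ℕ}

def blockEmbedding (k : ℕ) (i : Fin n) : Matrix (Fin n × Fin k) (Fin k) ℂ :=
  of fun p a => if p = (i, a) then 1 else 0

theorem conjTranspose_blockEmbedding_mul_self (i : Fin n) :
    (blockEmbedding k i)ᴴ * blockEmbedding k i = 1 := by
  ext a b
  simp [blockEmbedding, mul_apply, one_apply, Fintype.sum_prod_type, Prod.ext_iff, ite_and, eq_comm]

theorem one_kronecker_mul_blockEmbedding (R : Matrix (Fin k) (Fin k) ℂ) (i : Fin n) :
    ((1 : Matrix (Fin n) (Fin n) ℂ) ⊗ₖ R) * blockEmbedding k i = blockEmbedding k i * R := by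
  ext ⟨j, a⟩ b
  simp [blockEmbedding, mul_apply, one_apply, Fintype.sum_prod_type, Prod.ext_iff, ite_and]

theorem ptrace1_eq_sum (H : Matrix (Fin n × Fin k) (Fin n × Fin k) ℂ) :
    ptrace1 H = ∑ i : Fin n, (blockEmbedding k i)ᴴ * H * blockEmbedding k i := by
  ext a b
  simp [ptrace1, blockEmbedding, Matrix.sum_apply, mul_apply, Fintype.sum_prod_type, Prod.ext_iff,
    ite_and, apply_ite (starRingEnd ℂ)]

theorem trace_ptrace1 (H : Matrix (Fin n × Fin k) (Fin n × Fin k) ℂ) :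
    (ptrace1 H).trace = H.trace := by
  simp only [trace, diag, ptrace1, of_apply, Fintype.sum_prod_type]
  exact Finset.sum_comm

theorem ptrace1_conjTranspose_mul_mul_one_kronecker
    (H : Matrix (Fin n × Fin k) (Fin n × Fin k) ℂ) (R : Matrix (Fin k) (Fin k) ℂ) :
    ptrace1 (((1 : Matrix (Fin n) (Fin n) ℂ) ⊗ₖ R)ᴴ * H * ((1 : Matrix (Fin n) (Fin n) ℂ) ⊗ₖ R))
      = Rᴴ * ptrace1 H * R := by
  simp only [ptrace1_eq_sum, Finset.mul_sum, Finset.sum_mul]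
  refine Finset.sum_congr rfl fun i _ => ?_
  set E := blockEmbedding k i
  set K := (1 : Matrix (Fin n) (Fin n) ℂ) ⊗ₖ R
  have hKE : K * E = E * R := one_kronecker_mul_blockEmbedding R i
  calc Eᴴ * (Kᴴ * H * K) * E = (K * E)ᴴ * H * (K * E) := by
        simp only [conjTranspose_mul, Matrix.mul_assoc]
    _ = Rᴴ * (Eᴴ * H * E) * R := by
        rw [hKE]; simp only [conjTranspose_mul, Matrix.mul_assoc]

theorem Matrix.PosSemidef.ptrace1 {H : Matrix (Fin n × Fin k) (Fin n × Fin k) ℂ}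
    (hH : H.PosSemidef) : (ptrace1 H).PosSemidef := by
  rw [ptrace1_eq_sum]
  exact posSemidef_sum _ fun i _ => hH.conjTranspose_mul_mul_same _

theorem Matrix.PosDef.ptrace1 (hn : 0 < n) {H : Matrix (Fin n × Fin k) (Fin n × Fin k) ℂ}
    (hH : H.PosDef) : (ptrace1 H).PosDef := by
  rw [ptrace1_eq_sum]
  refine posDef_sum ⟨⟨0, hn⟩, Finset.mem_univ _⟩ fun i _ => hH.conjTranspose_mul_mul_same ?_
  refine Function.LeftInverse.injective (g := (blockEmbedding k i)ᴴ.mulVec) fun x => ?_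
  rw [mulVec_mulVec, conjTranspose_blockEmbedding_mul_self, one_mulVec]

theorem re_det_le_of_posDef_ptrace1 {H : Matrix (Fin n × Fin k) (Fin n × Fin k) ℂ}
    (hH : H.PosSemidef) (hT : (ptrace1 H).PosDef) :
    H.det.re ≤ ((ptrace1 H).det.re / (n : ℝ) ^ k) ^ n := by
  obtain ⟨R, hR⟩ := hT.exists_conjTranspose_mul_mul_eq_one
  set K := (1 : Matrix (Fin n) (Fin n) ℂ) ⊗ₖ R
  have hK : K.det = R.det ^ n := by simp [K, det_kronecker]
  have hnorm : ‖R.det‖ ^ 2 * (ptrace1 H).det.re = 1 := by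
    simpa [hR] using (re_det_conjTranspose_mul_mul (ptrace1 H) R).symm
  have htrace : (Kᴴ * H * K).trace.re = k := by
    simp [K, ← trace_ptrace1, ptrace1_conjTranspose_mul_mul_one_kronecker, hR]
  have amgm := (hH.conjTranspose_mul_mul_same K).re_det_le_re_trace_div_card_pow
  simp only [RCLike.re_to_complex, re_det_conjTranspose_mul_mul, htrace, hK, norm_pow] at amgm
  have hcard : ((k : ℝ) / (Fintype.card (Fin n × Fin k) : ℕ)) ^ Fintype.card (Fin n × Fin k)
      = (((n : ℝ) ^ k)⁻¹) ^ n := by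
    rcases Nat.eq_zero_or_pos k with rfl | hk
    · simp
    rw [Fintype.card_prod, Fintype.card_fin, Fintype.card_fin, Nat.cast_mul,
      div_mul_cancel_right₀ (by positivity), inv_pow, inv_pow, mul_comm n k, pow_mul]
  rw [hcard, ← pow_mul, mul_comm n, pow_mul] at amgm
  set r := ‖R.det‖ ^ 2
  have hr : 0 < r := lt_of_le_of_ne (by positivity) (left_ne_zero_of_mul_eq_one hnorm).symm
  rw [eq_inv_of_mul_eq_one_right hnorm]
  calc H.det.re = (r ^ n)⁻¹ * (r ^ n * H.det.re) := by field_simp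
    _ ≤ (r ^ n)⁻¹ * ((n : ℝ) ^ k)⁻¹ ^ n := by gcongr
    _ = (r⁻¹ / (n : ℝ) ^ k) ^ n := by rw [div_eq_mul_inv, mul_pow, inv_pow r]

end PartialTrace

theorem stmt3_general {n k : ℕ} (hn : 0 < n)
    (H : Matrix (Fin n × Fin k) (Fin n × Fin k) ℂ) (hH : H.PosSemidef) :
    ((ptrace1 H).det.re / (n : ℝ) ^ k) ^ n ≥ H.det.re := by
  by_cases hHd : H.PosDef
  · exact re_det_le_of_posDef_ptrace1 hH (hHd.ptrace1 hn)
  · have hdet : H.det = 0 := not_not.mp (mt hH.posDef_iff_det_ne_zero.mpr hHd)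
    have hT : 0 ≤ (ptrace1 H).det.re := (Complex.le_def.mp hH.ptrace1.det_nonneg).1
    rw [hdet, Complex.zero_re]
    positivity

/-- Strong Lin inequality: (det(tr₁H)/n^k)^n ≥ det H. -/
theorem stmt3 {n k : ℕ} (hn : 0 < n) (hk : 0 < k)
    (H : Matrix (Fin n × Fin k) (Fin n × Fin k) ℂ) (hH : H.PosSemidef) :
    ((ptrace1 H).det.re / (n : ℝ) ^ k) ^ n ≥ H.det.re :=
  stmt3_general hn H hH
end

section
/- Let 0 ≤ α < π/2 and let H be an nk×nk complex matrix, viewed as an n×n block matrix with k×k blocks, whose numerical range is contained in the sector S_α = {z ∈ ℂ : Re z > 0, |Im z| ≤ (Re z)·tan α}. Then |det(tr₁H)/n^k|^n ≥ (cos α)^{nk} |det H|, where tr₁H = Σᵢ H_{i,i}. -/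
open Matrix BigOperators ComplexOrder

/-- The sector S_α in the complex plane. -/
noncomputable def sector (α : ℝ) : Set ℂ := {z | 0 < z.re ∧ |z.im| ≤ z.re * Real.tan α}

/-- Numerical range of a complex matrix. -/
noncomputable def numRange {I : Type*} [Fintype I] (A : Matrix I I ℂ) : Set ℂ :=
  {z | ∃ x : I → ℂ, star x ⬝ᵥ x = 1 ∧ star x ⬝ᵥ (A *ᵥ x) = z}

/-!
Write `H = R + i S` with `R = ℜ H`, which the sector condition makes positive definite. Factoring
`R = Bᴴ B` gives `H = Bᴴ (1 + i T) B` with `T` Hermitian, so `|det H| = det R · ∏ⱼ |1 + i μⱼ|` over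
the eigenvalues `μⱼ` of `T`. Each `1 + i μⱼ` is a value `x* H x`, so the sector condition gives
`|μⱼ| ≤ tan α`, i.e. `|det H| ≤ (cos α)^(-nk) det R`; for `tr₁ H`, whose real part is `tr₁ R`, the
same identity gives `det (tr₁ R) ≤ |det (tr₁ H)|`. Finally `D = I ⊗ (tr₁ R / n) = Cᴴ C` has
`tr (D⁻¹ R) = nk`, so AM–GM for the eigenvalues of `Cᴴ⁻¹ R C⁻¹` gives
`det R ≤ det D = (det (tr₁ R) / n^k)^n`.
-/

open scoped ComplexStarModule MatrixOrder Kronecker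

namespace Matrix

variable {m : Type*} [Fintype m]

lemma dotProduct_conjTranspose_mulVec_self (A : Matrix m m ℂ) (x : m → ℂ) :
    star x ⬝ᵥ (Aᴴ *ᵥ x) = star (star x ⬝ᵥ (A *ᵥ x)) := by
  rw [dotProduct_mulVec, star_dotProduct, ← star_mulVec, star_star, dotProduct_comm]

lemma dotProduct_realPart_mulVec (A : Matrix m m ℂ) (x : m → ℂ) :
    star x ⬝ᵥ ((ℜ A : Matrix m m ℂ) *ᵥ x) = (star x ⬝ᵥ (A *ᵥ x)).re := by
  rw [realPart_apply_coe, smul_mulVec, add_mulVec, dotProduct_smul, dotProduct_add,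
    star_eq_conjTranspose, dotProduct_conjTranspose_mulVec_self, RCLike.star_def,
    Complex.re_eq_add_conj, Complex.real_smul]
  push_cast
  ring

lemma dotProduct_conjTranspose_mul_mul_mulVec (B M : Matrix m m ℂ) (x : m → ℂ) :
    star x ⬝ᵥ ((Bᴴ * M * B) *ᵥ x) = star (B *ᵥ x) ⬝ᵥ (M *ᵥ (B *ᵥ x)) := by
  rw [← mulVec_mulVec, ← mulVec_mulVec, dotProduct_mulVec, star_mulVec]

variable [DecidableEq m]

lemma PosDef.exists_isUnit_eq_conjTranspose_mul_self {R : Matrix m m ℂ} (hR : R.PosDef) :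
    ∃ B : Matrix m m ℂ, IsUnit B ∧ R = Bᴴ * B :=
  CStarAlgebra.isStrictlyPositive_iff_eq_star_mul_self.mp hR.isStrictlyPositive

lemma IsHermitian.norm_det_one_add_I_smul {T : Matrix m m ℂ} (hT : T.IsHermitian) :
    ‖(1 + Complex.I • T).det‖ = ∏ j, √(1 + hT.eigenvalues j ^ 2) := by
  have h : 1 + Complex.I • T = (-Complex.I) • (scalar m Complex.I - T) := by
    rw [scalar_apply, ← smul_one_eq_diagonal, smul_sub, smul_smul]
    simp [sub_eq_add_neg]
  rw [h, det_smul, ← eval_charpoly, hT.charpoly_eq, Polynomial.eval_prod, norm_mul, norm_pow,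
    norm_neg, Complex.norm_I, one_pow, one_mul, norm_prod]
  refine Finset.prod_congr rfl fun j _ => ?_
  rw [Polynomial.eval_sub, Polynomial.eval_X, Polynomial.eval_C, Complex.norm_def,
    Complex.normSq_apply]
  congr 1
  simp only [Complex.coe_algebraMap, Complex.sub_re, Complex.I_re, Complex.ofReal_re,
    Complex.sub_im, Complex.I_im, Complex.ofReal_im, sub_zero]
  ring

lemma IsHermitian.dotProduct_one_add_I_smul_mulVec_eigenvectorBasis {T : Matrix m m ℂ}
    (hT : T.IsHermitian) (j : m) :
    star ⇑(hT.eigenvectorBasis j) ⬝ᵥ ((1 + Complex.I • T) *ᵥ ⇑(hT.eigenvectorBasis j)) =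
      1 + hT.eigenvalues j * Complex.I := by
  have hv : star ⇑(hT.eigenvectorBasis j) ⬝ᵥ ⇑(hT.eigenvectorBasis j) = 1 := by
    rw [dotProduct_comm, ← EuclideanSpace.inner_eq_star_dotProduct, inner_self_eq_norm_sq_to_K,
      hT.eigenvectorBasis.orthonormal.1 j]
    simp
  rw [add_mulVec, one_mulVec, smul_mulVec, hT.mulVec_eigenvectorBasis, dotProduct_add,
    dotProduct_smul, dotProduct_smul, hv, Complex.real_smul, smul_eq_mul]
  ring

lemma exists_norm_det_eq_prod_mul_norm_det_realPart {A : Matrix m m ℂ}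
    (hA : (ℜ A : Matrix m m ℂ).PosDef) :
    ∃ μ : m → ℝ, ‖A.det‖ = (∏ j, √(1 + μ j ^ 2)) * ‖(ℜ A : Matrix m m ℂ).det‖ ∧
      ∀ j, ∃ x ≠ 0, star x ⬝ᵥ (A *ᵥ x) = 1 + μ j * Complex.I := by
  obtain ⟨B, hB, hRB⟩ := hA.exists_isUnit_eq_conjTranspose_mul_self
  have hBB : B * B⁻¹ = 1 := mul_nonsing_inv _ ((isUnit_iff_isUnit_det B).mp hB)
  have hBB' : B⁻¹ * B = 1 := nonsing_inv_mul _ ((isUnit_iff_isUnit_det B).mp hB)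
  set T := B⁻¹ᴴ * (ℑ A : Matrix m m ℂ) * B⁻¹
  have hT : T.IsHermitian := isHermitian_conjTranspose_mul_mul _ (ℑ A).2
  have hAT : A = Bᴴ * (1 + Complex.I • T) * B := by
    have hBinv : Bᴴ * B⁻¹ᴴ = 1 := by rw [← conjTranspose_mul, hBB', conjTranspose_one]
    conv_lhs => rw [← realPart_add_I_smul_imaginaryPart A, hRB]
    simp only [T, Matrix.mul_add, Matrix.add_mul, Matrix.mul_one, Matrix.mul_smul, Matrix.smul_mul,
      ← Matrix.mul_assoc, hBinv, Matrix.one_mul]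
    rw [Matrix.mul_assoc, hBB', Matrix.mul_one]
  refine ⟨hT.eigenvalues, ?_, fun j => ⟨B⁻¹ *ᵥ hT.eigenvectorBasis j, ?_, ?_⟩⟩
  · have hdet : A.det = (1 + Complex.I • T).det * (ℜ A : Matrix m m ℂ).det := by
      rw [hRB, det_mul, hAT, det_mul, det_mul]
      ring
    rw [hdet, norm_mul, hT.norm_det_one_add_I_smul]
  · intro h
    apply hT.eigenvectorBasis.orthonormal.ne_zero j
    have hv := congrArg (B *ᵥ ·) h
    simp only [mulVec_mulVec, hBB, one_mulVec, mulVec_zero] at hv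
    ext i
    simpa using congrFun hv i
  · rw [hAT, dotProduct_conjTranspose_mul_mul_mulVec, mulVec_mulVec, hBB, one_mulVec,
      hT.dotProduct_one_add_I_smul_mulVec_eigenvectorBasis]

lemma norm_det_realPart_le_norm_det {A : Matrix m m ℂ} (hA : (ℜ A : Matrix m m ℂ).PosDef) :
    ‖(ℜ A : Matrix m m ℂ).det‖ ≤ ‖A.det‖ := by
  obtain ⟨μ, hdet, -⟩ := exists_norm_det_eq_prod_mul_norm_det_realPart hA
  rw [hdet]
  refine le_mul_of_one_le_left (norm_nonneg _) (Finset.one_le_prod fun j _ => ?_)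
  exact Real.one_le_sqrt.mpr (by nlinarith [sq_nonneg (μ j)])

lemma norm_det_le_of_abs_im_le {A : Matrix m m ℂ} (hA : (ℜ A : Matrix m m ℂ).PosDef) {t : ℝ}
    (h : ∀ x ≠ 0, |(star x ⬝ᵥ (A *ᵥ x)).im| ≤ t * (star x ⬝ᵥ (A *ᵥ x)).re) :
    ‖A.det‖ ≤ √(1 + t ^ 2) ^ Fintype.card m * ‖(ℜ A : Matrix m m ℂ).det‖ := by
  obtain ⟨μ, hdet, hμ⟩ := exists_norm_det_eq_prod_mul_norm_det_realPart hA
  rw [hdet]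
  refine mul_le_mul_of_nonneg_right ?_ (norm_nonneg _)
  rw [← Finset.card_univ, ← Finset.prod_const]
  refine Finset.prod_le_prod (fun j _ => Real.sqrt_nonneg _) fun j _ => ?_
  obtain ⟨x, hx, hxA⟩ := hμ j
  have hμt : |μ j| ≤ t := by simpa [hxA] using h x hx
  have hμt2 : μ j ^ 2 ≤ t ^ 2 := sq_le_sq' (abs_le.mp hμt).1 (abs_le.mp hμt).2
  exact Real.sqrt_le_sqrt (by linarith)

lemma PosDef.norm_det_le_exp_trace_sub_card {X : Matrix m m ℂ} (hX : X.PosDef) :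
    ‖X.det‖ ≤ Real.exp (X.trace.re - Fintype.card m) := by
  have h : ∏ j, hX.1.eigenvalues j ≤ ∏ j, Real.exp (hX.1.eigenvalues j - 1) :=
    Finset.prod_le_prod (fun j _ => (hX.eigenvalues_pos j).le) fun j _ => by
      linarith [Real.add_one_le_exp (hX.1.eigenvalues j - 1)]
  rw [← Real.exp_sum, Finset.sum_sub_distrib] at h
  simpa [hX.1.det_eq_prod_eigenvalues, hX.1.trace_eq_sum_eigenvalues, norm_prod,
    abs_of_pos (hX.eigenvalues_pos _)] using h

lemma PosDef.norm_det_le_of_re_trace_inv_mul_le {A B : Matrix m m ℂ} (hA : A.PosDef)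
    (hB : B.PosDef) (h : (B⁻¹ * A).trace.re ≤ Fintype.card m) : ‖A.det‖ ≤ ‖B.det‖ := by
  obtain ⟨C, hC, rfl⟩ := hB.exists_isUnit_eq_conjTranspose_mul_self
  have hCdet : IsUnit C.det := (isUnit_iff_isUnit_det C).mp hC
  have hX : (C⁻¹ᴴ * A * C⁻¹).PosDef :=
    hA.conjTranspose_mul_mul_same (mulVec_injective_iff_isUnit.mpr (isUnit_nonsing_inv_iff.mpr hC))
  have htr : (C⁻¹ᴴ * A * C⁻¹).trace = ((Cᴴ * C)⁻¹ * A).trace := by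
    rw [trace_mul_cycle, Matrix.mul_inv_rev, conjTranspose_nonsing_inv]
  have hdet : ‖A.det‖ = ‖(C⁻¹ᴴ * A * C⁻¹).det‖ * ‖(Cᴴ * C).det‖ := by
    simp only [det_mul, det_conjTranspose, norm_mul, norm_star]
    have h1 : ‖C⁻¹.det‖ * ‖C.det‖ = 1 := by
      rw [← norm_mul, det_nonsing_inv_mul_det C hCdet, norm_one]
    calc ‖A.det‖ = ‖A.det‖ * (‖C⁻¹.det‖ * ‖C.det‖) ^ 2 := by rw [h1, one_pow, mul_one]
      _ = _ := by ring
  have hX1 : ‖(C⁻¹ᴴ * A * C⁻¹).det‖ ≤ 1 :=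
    hX.norm_det_le_exp_trace_sub_card.trans (Real.exp_le_one_iff.mpr (by rw [htr]; linarith))
  rw [hdet]
  exact mul_le_of_le_one_left (norm_nonneg _) hX1

end Matrix

section PartialTrace

variable {n k : ℕ}

lemma ptrace1_eq_sum_submatrix (H : Matrix (Fin n × Fin k) (Fin n × Fin k) ℂ) :
    ptrace1 H = ∑ i, H.submatrix (Prod.mk i) (Prod.mk i) := by
  ext l l'
  simp [ptrace1, Matrix.sum_apply]

lemma realPart_ptrace1 (H : Matrix (Fin n × Fin k) (Fin n × Fin k) ℂ) :
    (ℜ (ptrace1 H) : Matrix (Fin k) (Fin k) ℂ) =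
      ptrace1 (ℜ H : Matrix (Fin n × Fin k) (Fin n × Fin k) ℂ) := by
  ext l l'
  simp [realPart_apply_coe, ptrace1, Finset.sum_add_distrib, Finset.mul_sum]

lemma posDef_ptrace1 (hn : 0 < n) {R : Matrix (Fin n × Fin k) (Fin n × Fin k) ℂ}
    (hR : R.PosDef) : (ptrace1 R).PosDef := by
  rw [ptrace1_eq_sum_submatrix]
  exact posDef_sum ⟨⟨0, hn⟩, Finset.mem_univ _⟩ fun i _ =>
    hR.submatrix (Prod.mk_right_injective i)

lemma trace_one_kronecker_mul_eq_trace_mul_ptrace1 (M : Matrix (Fin k) (Fin k) ℂ)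
    (R : Matrix (Fin n × Fin k) (Fin n × Fin k) ℂ) :
    (((1 : Matrix (Fin n) (Fin n) ℂ) ⊗ₖ M) * R).trace = (M * ptrace1 R).trace := by
  simp only [trace, diag, mul_apply, kroneckerMap_apply, one_apply, ptrace1, of_apply,
    Fintype.sum_prod_type, ite_mul, zero_mul, one_mul, Finset.sum_ite_irrel,
    Finset.sum_ite_eq, Finset.mem_univ, if_true, Finset.sum_const_zero, Finset.mul_sum]
  rw [Finset.sum_comm]
  exact Finset.sum_congr rfl fun l _ => Finset.sum_comm

lemma norm_det_le_norm_det_ptrace1_div_pow (hn : 0 < n)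
    {R : Matrix (Fin n × Fin k) (Fin n × Fin k) ℂ} (hR : R.PosDef) :
    ‖R.det‖ ≤ (‖(ptrace1 R).det‖ / (n : ℝ) ^ k) ^ n := by
  have hn' : (n : ℂ) ≠ 0 := by exact_mod_cast hn.ne'
  set C := (n : ℂ)⁻¹ • ptrace1 R with hCdef
  have hC : C.PosDef := (posDef_ptrace1 hn hR).smul (by positivity)
  have hCC : C⁻¹ * ptrace1 R = (n : ℂ) • 1 := by
    rw [show ptrace1 R = (n : ℂ) • C by rw [hCdef, smul_smul, mul_inv_cancel₀ hn', one_smul],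
      Matrix.mul_smul, nonsing_inv_mul _ ((isUnit_iff_isUnit_det C).mp hC.isUnit)]
  have htr : (((1 : Matrix (Fin n) (Fin n) ℂ) ⊗ₖ C)⁻¹ * R).trace.re ≤
      Fintype.card (Fin n × Fin k) := by
    rw [inv_kronecker, inv_one, trace_one_kronecker_mul_eq_trace_mul_ptrace1, hCC]
    simp
  calc ‖R.det‖ ≤ ‖((1 : Matrix (Fin n) (Fin n) ℂ) ⊗ₖ C).det‖ :=
        hR.norm_det_le_of_re_trace_inv_mul_le (PosDef.one.kronecker hC) htr
    _ = _ := by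
        rw [det_kronecker, det_one, one_pow, one_mul, hCdef, det_smul]
        simp [div_eq_inv_mul]

end PartialTrace

section Sector

lemma smul_mem_sector_iff {α c : ℝ} (hc : 0 < c) {z : ℂ} : c • z ∈ sector α ↔ z ∈ sector α := by
  simp only [sector, Set.mem_ofPred_eq, Complex.smul_re, Complex.smul_im, smul_eq_mul, abs_mul,
    abs_of_pos hc, mul_assoc]
  exact and_congr (mul_pos_iff_of_pos_left hc) (mul_le_mul_iff_right₀ hc)

variable {m : Type*} [Fintype m]

lemma dotProduct_mulVec_mem_sector {α : ℝ} {A : Matrix m m ℂ} (hA : numRange A ⊆ sector α)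
    {x : m → ℂ} (hx : x ≠ 0) : star x ⬝ᵥ (A *ᵥ x) ∈ sector α := by
  obtain ⟨c, hc, hcx⟩ := RCLike.pos_iff_exists_ofReal.mp (dotProduct_star_self_pos_iff.mpr hx)
  set y := (√c)⁻¹ • x
  have hy : star y = (√c)⁻¹ • star x := by simp [y, star_smul]
  have hsq : (√c)⁻¹ * (√c)⁻¹ = c⁻¹ := by rw [← mul_inv, Real.mul_self_sqrt hc.le]
  have hyy : star y ⬝ᵥ y = 1 := by
    rw [hy, smul_dotProduct, dotProduct_smul, smul_smul, hsq, ← hcx, Complex.real_smul]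
    simp [hc.ne']
  have hyA : star y ⬝ᵥ (A *ᵥ y) = c⁻¹ • (star x ⬝ᵥ (A *ᵥ x)) := by
    rw [hy, mulVec_smul, smul_dotProduct, dotProduct_smul, smul_smul, hsq]
  exact (smul_mem_sector_iff (inv_pos.mpr hc)).mp (hA ⟨y, hyy, hyA⟩)

lemma posDef_realPart_of_numRange_subset_sector {α : ℝ} {A : Matrix m m ℂ}
    (hA : numRange A ⊆ sector α) : (ℜ A : Matrix m m ℂ).PosDef :=
  PosDef.of_dotProduct_mulVec_pos (ℜ A).2 fun x hx => by
    rw [dotProduct_realPart_mulVec]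
    exact Complex.zero_lt_real.mpr (dotProduct_mulVec_mem_sector hA hx).1

lemma cos_pow_mul_norm_det_le_norm_det_realPart [DecidableEq m] {α : ℝ} (hα0 : 0 ≤ α)
    (hα : α < Real.pi / 2) {A : Matrix m m ℂ} (hA : numRange A ⊆ sector α) :
    Real.cos α ^ Fintype.card m * ‖A.det‖ ≤ ‖(ℜ A : Matrix m m ℂ).det‖ := by
  have hcos : 0 < Real.cos α := Real.cos_pos_of_mem_Ioo ⟨by linarith [Real.pi_pos], hα⟩
  have h := norm_det_le_of_abs_im_le (posDef_realPart_of_numRange_subset_sector hA)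
    fun x hx => (dotProduct_mulVec_mem_sector hA hx).2.trans_eq (mul_comm _ _)
  rw [← inv_inv (√(1 + _)), Real.inv_sqrt_one_add_tan_sq hcos, inv_pow] at h
  rwa [le_inv_mul_iff₀ (by positivity)] at h

end Sector

theorem stmt4_general {n k : ℕ} (hn : 0 < n) {α : ℝ}
    (hα0 : 0 ≤ α) (hα : α < Real.pi / 2)
    (H : Matrix (Fin n × Fin k) (Fin n × Fin k) ℂ)
    (hH : numRange H ⊆ sector α) :
    (‖(ptrace1 H).det‖ / (n : ℝ) ^ k) ^ n ≥
      Real.cos α ^ (n * k) * ‖H.det‖ := by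
  set R : Matrix (Fin n × Fin k) (Fin n × Fin k) ℂ := ↑(ℜ H) with hRdef
  have hR : R.PosDef := posDef_realPart_of_numRange_subset_sector hH
  have hP : (ℜ (ptrace1 H) : Matrix (Fin k) (Fin k) ℂ).PosDef := by
    rw [realPart_ptrace1]
    exact posDef_ptrace1 hn hR
  calc Real.cos α ^ (n * k) * ‖H.det‖ ≤ ‖R.det‖ := by
        simpa using cos_pow_mul_norm_det_le_norm_det_realPart hα0 hα hH
    _ ≤ (‖(ptrace1 R).det‖ / (n : ℝ) ^ k) ^ n := norm_det_le_norm_det_ptrace1_div_pow hn hR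
    _ ≤ (‖(ptrace1 H).det‖ / (n : ℝ) ^ k) ^ n := by
        rw [hRdef, ← realPart_ptrace1]
        gcongr
        exact norm_det_realPart_le_norm_det hP

/-- Theorem 3.6: |det(tr₁H)/n^k|^n ≥ (cos α)^{nk} |det H| for sector matrices. -/
theorem stmt4 {n k : ℕ} (hn : 0 < n) (hk : 0 < k) {α : ℝ}
    (hα0 : 0 ≤ α) (hα : α < Real.pi / 2)
    (H : Matrix (Fin n × Fin k) (Fin n × Fin k) ℂ)
    (hH : numRange H ⊆ sector α) :
    (‖(ptrace1 H).det‖ / (n : ℝ) ^ k) ^ n ≥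
      Real.cos α ^ (n * k) * ‖H.det‖ :=
  stmt4_general hn hα0 hα H hH
end

section
/- Let 0 ≤ α < π/2 and H = [H_{i,j}]_{i,j=1}^n ∈ M_n(M_k) with numerical range contained in S_α. Then ((Σ_{i=1}^n |det H_{i,i}|)/n)^n ≥ (cos α)^{nk} |det H|. -/
open Matrix BigOperators ComplexOrder

/-!
Put `A = ℜ H`, which is positive definite, and normalise it by a congruence `Tᴴ A T = 1`. Then
`Tᴴ H T = 1 + i B` with `B` Hermitian, and the sector condition bounds the eigenvalues of `B` by
`tan α`, so `|det A| ≤ |det H| ≤ (cos α)^(-nk) |det A|`; the same holds for each diagonal block.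
Fischer's inequality `det A ≤ ∏ det A_ii` (by induction, through Schur complements) and AM-GM give
`cos^(nk) α |det H| ≤ det A ≤ ∏ det A_ii ≤ ∏ |det H_ii| ≤ ((∑ |det H_ii|) / n)^n`.
-/

open scoped ComplexStarModule

theorem ofReal_mul_mem_sector_iff {α r : ℝ} {z : ℂ} (hr : 0 < r) :
    (r : ℂ) * z ∈ sector α ↔ z ∈ sector α := by
  simp only [sector, Set.mem_ofPred_eq, Complex.re_ofReal_mul, Complex.im_ofReal_mul, abs_mul,
    abs_of_pos hr, mul_assoc, mul_pos_iff_of_pos_left hr, mul_le_mul_iff_right₀ hr]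

theorem Complex.one_le_norm_one_add_mul_I (μ : ℝ) : 1 ≤ ‖1 + μ * Complex.I‖ := by
  rw [← Complex.ofReal_one, Complex.norm_add_mul_I, Real.one_le_sqrt, one_pow]
  exact le_add_of_nonneg_right (sq_nonneg μ)

theorem Complex.norm_one_add_mul_I_le {α μ : ℝ} (hcos : 0 < Real.cos α)
    (hμ : |μ| ≤ Real.tan α) : ‖1 + μ * Complex.I‖ ≤ (Real.cos α)⁻¹ := by
  rw [← Complex.ofReal_one, Complex.norm_add_mul_I, ← Real.inv_sqrt_one_add_tan_sq hcos, inv_inv,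
    one_pow, ← sq_abs μ]
  gcongr

theorem Real.prod_le_arith_mean_pow {ι : Type*} [Fintype ι] [Nonempty ι] (z : ι → ℝ)
    (hz : ∀ i, 0 ≤ z i) : ∏ i, z i ≤ ((∑ i, z i) / Fintype.card ι) ^ Fintype.card ι := by
  have hcard : (0 : ℝ) < Fintype.card ι := by exact_mod_cast Fintype.card_pos
  have h := Real.geom_mean_le_arith_mean Finset.univ (fun _ => 1) z (fun _ _ => zero_le_one)
    (by simpa using hcard) (fun i _ => hz i)
  simp only [Real.rpow_one, Finset.sum_const, Finset.card_univ, nsmul_eq_mul, mul_one,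
    one_mul] at h
  rwa [Real.rpow_inv_le_iff_of_pos (Finset.prod_nonneg fun i _ => hz i)
    (div_nonneg (Finset.sum_nonneg fun i _ => hz i) hcard.le) hcard, Real.rpow_natCast] at h

theorem realPart_submatrix {I J : Type*} (M : Matrix I I ℂ) (f : J → I) :
    (ℜ (M.submatrix f f) : Matrix J J ℂ) = (ℜ M : Matrix I I ℂ).submatrix f f := by
  ext a b
  simp [realPart_apply_coe]

section

variable {I : Type*} [Fintype I]

theorem star_dotProduct_conjTranspose_mulVec (M : Matrix I I ℂ) (x : I → ℂ) :
    star x ⬝ᵥ (Mᴴ *ᵥ x) = star (star x ⬝ᵥ (M *ᵥ x)) := by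
  rw [star_dotProduct, star_mulVec, conjTranspose_conjTranspose, dotProduct_mulVec]

theorem star_dotProduct_realPart_mulVec (M : Matrix I I ℂ) (x : I → ℂ) :
    star x ⬝ᵥ ((ℜ M : Matrix I I ℂ) *ᵥ x) = ((star x ⬝ᵥ (M *ᵥ x)).re : ℂ) := by
  rw [realPart_apply_coe, smul_mulVec, add_mulVec, dotProduct_smul, dotProduct_add,
    star_eq_conjTranspose, star_dotProduct_conjTranspose_mulVec, Complex.re_eq_add_conj]
  simp only [RCLike.star_def, smul_add, Complex.real_smul, Complex.ofReal_inv,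
    Complex.ofReal_ofNat]
  ring

theorem realPart_conjTranspose_mul_mul {J : Type*} [Fintype J] (M : Matrix I I ℂ)
    (T : Matrix I J ℂ) :
    (ℜ (Tᴴ * M * T) : Matrix J J ℂ) = Tᴴ * (ℜ M : Matrix I I ℂ) * T := by
  simp only [realPart_apply_coe, star_eq_conjTranspose, conjTranspose_mul,
    conjTranspose_conjTranspose, Matrix.mul_smul, Matrix.smul_mul, Matrix.mul_add,
    Matrix.add_mul, Matrix.mul_assoc]

variable [DecidableEq I]

open scoped MatrixOrder in
theorem Matrix.PosDef.exists_conjTranspose_mul_mul_eq_one_s10 {A : Matrix I I ℂ} (hA : A.PosDef) :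
    ∃ T : Matrix I I ℂ, Tᴴ * A * T = 1 := by
  set S := CFC.sqrt A
  have hS : Sᴴ = S := (CFC.sqrt_nonneg A).posSemidef.1
  have hSS : S * S = A := CFC.sqrt_mul_sqrt_self A hA.posSemidef.nonneg
  have hSu : IsUnit S.det :=
    (isUnit_iff_isUnit_det S).mp ((CFC.isUnit_sqrt_iff A hA.posSemidef.nonneg).mpr hA.isUnit)
  refine ⟨S⁻¹, ?_⟩
  rw [conjTranspose_nonsing_inv, hS, ← hSS, ← Matrix.mul_assoc, nonsing_inv_mul _ hSu,
    Matrix.one_mul, mul_nonsing_inv _ hSu]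

theorem injective_mulVec_of_conjTranspose_mul_mul_eq_one {A T : Matrix I I ℂ}
    (hT : Tᴴ * A * T = 1) : Function.Injective T.mulVec := fun x y h => by
  simpa [mulVec_mulVec, hT] using congrArg (Tᴴ * A).mulVec h

theorem norm_det_eq_of_conjTranspose_mul_mul_eq_one {A T : Matrix I I ℂ}
    (hT : Tᴴ * A * T = 1) (X : Matrix I I ℂ) : ‖X.det‖ = ‖A.det‖ * ‖(Tᴴ * X * T).det‖ := by
  have h := congrArg (‖det ·‖) hT
  simp only [det_mul, det_conjTranspose, norm_mul, norm_star, det_one, norm_one] at h ⊢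
  linear_combination (-‖X.det‖) * h

theorem Matrix.IsHermitian.star_eigenvectorBasis_dotProduct_self {B : Matrix I I ℂ}
    (hB : B.IsHermitian) (j : I) :
    star ⇑(hB.eigenvectorBasis j) ⬝ᵥ ⇑(hB.eigenvectorBasis j) = 1 := by
  rw [dotProduct_comm, ← EuclideanSpace.inner_eq_star_dotProduct,
    inner_self_eq_norm_sq_to_K, hB.eigenvectorBasis.orthonormal.1 j]
  simp

theorem Matrix.IsHermitian.star_eigenvectorBasis_dotProduct_mulVec {B : Matrix I I ℂ}
    (hB : B.IsHermitian) (j : I) :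
    star ⇑(hB.eigenvectorBasis j) ⬝ᵥ (B *ᵥ ⇑(hB.eigenvectorBasis j)) = hB.eigenvalues j := by
  rw [hB.mulVec_eigenvectorBasis, dotProduct_smul, hB.star_eigenvectorBasis_dotProduct_self]
  simp

theorem Matrix.IsHermitian.det_one_add_I_smul {B : Matrix I I ℂ} (hB : B.IsHermitian) :
    (1 + Complex.I • B).det = ∏ j, (1 + hB.eigenvalues j * Complex.I) := by
  set U := hB.eigenvectorUnitary
  have h : 1 + Complex.I • B =
      Unitary.conjStarAlgAut ℂ _ U (diagonal fun j => 1 + hB.eigenvalues j * Complex.I) := by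
    conv_lhs => rw [hB.spectral_theorem]
    rw [← map_one (Unitary.conjStarAlgAut ℂ _ U), ← map_smul, ← map_add]
    congr 1
    ext i j
    by_cases hij : i = j <;> simp [hij, mul_comm]
  rw [h, Unitary.conjStarAlgAut_apply, det_mul_comm, ← Matrix.mul_assoc,
    Unitary.coe_star_mul_self, Matrix.one_mul, det_diagonal]

theorem Matrix.IsHermitian.one_le_norm_det_one_add_I_smul {B : Matrix I I ℂ}
    (hB : B.IsHermitian) : 1 ≤ ‖(1 + Complex.I • B).det‖ := by
  rw [hB.det_one_add_I_smul, norm_prod]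
  exact Finset.one_le_prod fun j _ => Complex.one_le_norm_one_add_mul_I _

theorem Matrix.PosSemidef.norm_det_le_one {K : Matrix I I ℂ} (hK : K.PosSemidef)
    (h1K : (1 - K).PosSemidef) : ‖K.det‖ ≤ 1 := by
  rw [hK.1.det_eq_prod_eigenvalues, norm_prod]
  refine Finset.prod_le_one (fun _ _ => norm_nonneg _) fun j _ => ?_
  have hle : (hK.1.eigenvalues j : ℂ) ≤ 1 := by
    have := h1K.dotProduct_mulVec_nonneg (hK.1.eigenvectorBasis j)
    rwa [sub_mulVec, one_mulVec, dotProduct_sub, hK.1.star_eigenvectorBasis_dotProduct_self,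
      hK.1.star_eigenvectorBasis_dotProduct_mulVec, sub_nonneg] at this
  rw [RCLike.norm_ofReal, abs_of_nonneg (hK.eigenvalues_nonneg j)]
  exact_mod_cast hle

theorem Matrix.PosDef.norm_det_le_of_sub_posSemidef {X Y : Matrix I I ℂ} (hY : Y.PosDef)
    (hX : X.PosSemidef) (hYX : (Y - X).PosSemidef) : ‖X.det‖ ≤ ‖Y.det‖ := by
  obtain ⟨T, hT⟩ := hY.exists_conjTranspose_mul_mul_eq_one_s10
  have h1K : 1 - Tᴴ * X * T = Tᴴ * (Y - X) * T := by
    rw [Matrix.mul_sub, Matrix.sub_mul, hT]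
  rw [norm_det_eq_of_conjTranspose_mul_mul_eq_one hT X]
  exact mul_le_of_le_one_right (norm_nonneg _) <|
    (hX.conjTranspose_mul_mul_same T).norm_det_le_one (h1K ▸ hYX.conjTranspose_mul_mul_same T)

end

theorem Matrix.PosDef.norm_det_le_mul_toBlocks {J K : Type*} [Fintype J] [DecidableEq J]
    [Fintype K] [DecidableEq K] {A : Matrix (J ⊕ K) (J ⊕ K) ℂ} (hA : A.PosDef) :
    ‖A.det‖ ≤ ‖A.toBlocks₁₁.det‖ * ‖A.toBlocks₂₂.det‖ := by
  have h₁₁ : A.toBlocks₁₁.PosDef := hA.submatrix Sum.inl_injective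
  have h₂₂ : A.toBlocks₂₂.PosDef := hA.submatrix Sum.inr_injective
  have h₂₁ : A.toBlocks₂₁ = A.toBlocks₁₂ᴴ := by
    ext i j
    exact (hA.1.apply _ _).symm
  let := h₁₁.isUnit.invertible
  have hA' : A = fromBlocks A.toBlocks₁₁ A.toBlocks₁₂ A.toBlocks₁₂ᴴ A.toBlocks₂₂ := by
    rw [← h₂₁, fromBlocks_toBlocks]
  have hSchur := (PosDef.fromBlocks₁₁ A.toBlocks₁₂ A.toBlocks₂₂ h₁₁).mp (hA' ▸ hA.posSemidef)
  have hR := h₁₁.inv.posSemidef.conjTranspose_mul_mul_same A.toBlocks₁₂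
  conv_lhs => rw [hA', det_fromBlocks₁₁, invOf_eq_nonsing_inv, norm_mul]
  gcongr
  exact h₂₂.norm_det_le_of_sub_posSemidef hSchur (by simpa using hR)

theorem Matrix.PosDef.norm_det_le_prod_norm_det_blocks {κ : Type*} [Fintype κ] [DecidableEq κ]
    {n : ℕ} {A : Matrix (Fin n × κ) (Fin n × κ) ℂ} (hA : A.PosDef) :
    ‖A.det‖ ≤ ∏ i, ‖(A.submatrix (Prod.mk i) (Prod.mk i)).det‖ := by
  induction n with
  | zero => simp [det_isEmpty]
  | succ n ih =>
    let e : Fin (n + 1) × κ ≃ κ ⊕ (Fin n × κ) :=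
      ((finSuccEquiv n).prodCongr (Equiv.refl κ)).trans optionProdEquiv
    set A' := A.submatrix e.symm e.symm
    have hA' : A'.PosDef := hA.submatrix e.symm.injective
    have h₁₁ : A'.toBlocks₁₁ = A.submatrix (Prod.mk 0) (Prod.mk 0) := rfl
    have h₂₂ (i : Fin n) : A'.toBlocks₂₂.submatrix (Prod.mk i) (Prod.mk i) =
        A.submatrix (Prod.mk i.succ) (Prod.mk i.succ) := rfl
    calc ‖A.det‖ = ‖A'.det‖ := by rw [det_submatrix_equiv_self]
      _ ≤ ‖A'.toBlocks₁₁.det‖ * ‖A'.toBlocks₂₂.det‖ := hA'.norm_det_le_mul_toBlocks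
      _ ≤ ‖A'.toBlocks₁₁.det‖ *
            ∏ i, ‖(A'.toBlocks₂₂.submatrix (Prod.mk i) (Prod.mk i)).det‖ := by
        gcongr
        exact ih (hA'.submatrix Sum.inr_injective)
      _ = ∏ i, ‖(A.submatrix (Prod.mk i) (Prod.mk i)).det‖ := by
        rw [Fin.prod_univ_succ, h₁₁]
        simp only [h₂₂]

section

variable {I : Type*} [Fintype I]

-- Unlike `numRange M ⊆ sector α`, this condition is stable under congruence `M ↦ Bᴴ * M * B`.
def SectorialForm (α : ℝ) (M : Matrix I I ℂ) : Prop :=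
  ∀ x : I → ℂ, x ≠ 0 → star x ⬝ᵥ (M *ᵥ x) ∈ sector α

theorem sectorialForm_of_numRange_subset {α : ℝ} {M : Matrix I I ℂ}
    (h : numRange M ⊆ sector α) : SectorialForm α M := by
  intro x hx
  obtain ⟨hre, him⟩ := Complex.pos_iff.mp (dotProduct_star_self_pos_iff.mpr hx)
  set c := (star x ⬝ᵥ x).re
  have hxx : star x ⬝ᵥ x = c := Complex.ext rfl (by simp [him])
  set r := (√c)⁻¹
  have hr : 0 < r * r := by positivity
  have hrrc : r * r * c = 1 := by
    rw [← sq, inv_pow, Real.sq_sqrt hre.le, inv_mul_cancel₀ hre.ne']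
  have hunit : star (r • x) ⬝ᵥ (r • x) = 1 := by
    rw [star_smul, star_trivial, smul_dotProduct, dotProduct_smul, hxx, smul_smul,
      Complex.real_smul]
    exact_mod_cast hrrc
  have hform : star (r • x) ⬝ᵥ (M *ᵥ (r • x)) = ((r * r : ℝ) : ℂ) * (star x ⬝ᵥ (M *ᵥ x)) := by
    rw [star_smul, star_trivial, mulVec_smul, smul_dotProduct, dotProduct_smul, smul_smul,
      Complex.real_smul]
  rw [← ofReal_mul_mem_sector_iff hr, ← hform]
  exact h ⟨_, hunit, rfl⟩

namespace SectorialForm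

variable {α : ℝ} {M : Matrix I I ℂ}

theorem posDef_realPart (hM : SectorialForm α M) : (ℜ M : Matrix I I ℂ).PosDef :=
  .of_dotProduct_mulVec_pos (ℜ M).2 fun x hx => by
    rw [star_dotProduct_realPart_mulVec]
    exact Complex.zero_lt_real.mpr (hM x hx).1

theorem conjTranspose_mul_mul_same {J : Type*} [Fintype J] (hM : SectorialForm α M)
    {B : Matrix I J ℂ} (hB : Function.Injective B.mulVec) : SectorialForm α (Bᴴ * M * B) := by
  intro x hx
  have hBx : B *ᵥ x ≠ 0 := fun h => hx <| hB.eq_iff' (mulVec_zero _) |>.1 h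
  simpa only [star_mulVec, dotProduct_mulVec, vecMul_vecMul, ← mulVec_mulVec] using hM _ hBx

theorem submatrix {J : Type*} [Fintype J] (hM : SectorialForm α M) {f : J → I}
    (hf : Function.Injective f) : SectorialForm α (M.submatrix f f) := by
  classical
  set B : Matrix I J ℂ := (1 : Matrix I I ℂ).submatrix id f
  have hBB : Bᴴ * B = 1 := by
    ext a b
    simp [B, Matrix.mul_apply, Matrix.one_apply, hf.eq_iff]
  have hB : Function.Injective B.mulVec := fun x y h => by
    simpa [mulVec_mulVec, hBB] using congrArg Bᴴ.mulVec h
  have hMB : Bᴴ * M * B = M.submatrix f f := by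
    ext a b
    simp [B, Matrix.mul_apply, Matrix.one_apply]
  simpa [hMB] using hM.conjTranspose_mul_mul_same hB

variable [DecidableEq I]

theorem abs_eigenvalues_le {B : Matrix I I ℂ} (hB : B.IsHermitian)
    (h : SectorialForm α (1 + Complex.I • B)) (j : I) : |hB.eigenvalues j| ≤ Real.tan α := by
  set v := ⇑(hB.eigenvectorBasis j)
  have hv : star v ⬝ᵥ v = 1 := hB.star_eigenvectorBasis_dotProduct_self j
  have hform : star v ⬝ᵥ ((1 + Complex.I • B) *ᵥ v) = 1 + hB.eigenvalues j * Complex.I := by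
    rw [add_mulVec, one_mulVec, smul_mulVec, dotProduct_add, dotProduct_smul, hv,
      hB.star_eigenvectorBasis_dotProduct_mulVec, smul_eq_mul, mul_comm]
  have hv0 : v ≠ 0 := fun h0 => by simp [h0] at hv
  simpa [hform] using (h v hv0).2

theorem norm_det_one_add_I_smul_le {B : Matrix I I ℂ} (hB : B.IsHermitian)
    (h : SectorialForm α (1 + Complex.I • B)) (hcos : 0 < Real.cos α) :
    ‖(1 + Complex.I • B).det‖ ≤ (Real.cos α)⁻¹ ^ Fintype.card I := by
  rw [hB.det_one_add_I_smul, norm_prod, ← Finset.card_univ, ← Finset.prod_const]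
  exact Finset.prod_le_prod (fun _ _ => norm_nonneg _) fun j _ =>
    Complex.norm_one_add_mul_I_le hcos (h.abs_eigenvalues_le hB j)

theorem exists_norm_det_eq (hM : SectorialForm α M) :
    ∃ B : Matrix I I ℂ, B.IsHermitian ∧ SectorialForm α (1 + Complex.I • B) ∧
      ‖M.det‖ = ‖(ℜ M : Matrix I I ℂ).det‖ * ‖(1 + Complex.I • B).det‖ := by
  obtain ⟨T, hT⟩ := hM.posDef_realPart.exists_conjTranspose_mul_mul_eq_one_s10
  have hN := realPart_add_I_smul_imaginaryPart (Tᴴ * M * T)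
  rw [realPart_conjTranspose_mul_mul, hT] at hN
  refine ⟨_, (ℑ (Tᴴ * M * T)).2, ?_, ?_⟩ <;> rw [hN]
  · exact hM.conjTranspose_mul_mul_same (injective_mulVec_of_conjTranspose_mul_mul_eq_one hT)
  · exact norm_det_eq_of_conjTranspose_mul_mul_eq_one hT M

theorem norm_det_realPart_le (hM : SectorialForm α M) :
    ‖(ℜ M : Matrix I I ℂ).det‖ ≤ ‖M.det‖ := by
  obtain ⟨B, hB, -, hdet⟩ := hM.exists_norm_det_eq
  rw [hdet]
  exact le_mul_of_one_le_right (norm_nonneg _) hB.one_le_norm_det_one_add_I_smul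

theorem cos_pow_mul_norm_det_le (hM : SectorialForm α M) (hcos : 0 < Real.cos α) :
    Real.cos α ^ Fintype.card I * ‖M.det‖ ≤ ‖(ℜ M : Matrix I I ℂ).det‖ := by
  obtain ⟨B, hB, hBα, hdet⟩ := hM.exists_norm_det_eq
  rw [hdet, mul_left_comm]
  refine mul_le_of_le_one_right (norm_nonneg _) ?_
  calc Real.cos α ^ Fintype.card I * ‖(1 + Complex.I • B).det‖
      ≤ Real.cos α ^ Fintype.card I * (Real.cos α)⁻¹ ^ Fintype.card I := by
        gcongr
        exact hBα.norm_det_one_add_I_smul_le hB hcos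
    _ = 1 := by rw [← mul_pow, mul_inv_cancel₀ hcos.ne', one_pow]

end SectorialForm

end

theorem stmt10_general {n k : ℕ} (hn : 0 < n) {α : ℝ}
    (hα0 : 0 ≤ α) (hα : α < Real.pi / 2)
    (H : Matrix (Fin n × Fin k) (Fin n × Fin k) ℂ)
    (hH : numRange H ⊆ sector α) :
    ((∑ i : Fin n, ‖(Matrix.of fun l m : Fin k => H (i, l) (i, m)).det‖) / n) ^ n ≥
      Real.cos α ^ (n * k) * ‖H.det‖ := by
  have hcos : 0 < Real.cos α := Real.cos_pos_of_mem_Ioo ⟨by linarith [Real.pi_pos], hα⟩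
  have hsect := sectorialForm_of_numRange_subset hH
  have : Nonempty (Fin n) := ⟨⟨0, hn⟩⟩
  have hblocks (i : Fin n) :
      (Matrix.of fun l m : Fin k => H (i, l) (i, m)) = H.submatrix (Prod.mk i) (Prod.mk i) := rfl
  simp only [hblocks]
  set A : Matrix (Fin n × Fin k) (Fin n × Fin k) ℂ := ↑(ℜ H)
  calc Real.cos α ^ (n * k) * ‖H.det‖
      ≤ ‖A.det‖ := by simpa using hsect.cos_pow_mul_norm_det_le hcos
    _ ≤ ∏ i, ‖(A.submatrix (Prod.mk i) (Prod.mk i)).det‖ :=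
        hsect.posDef_realPart.norm_det_le_prod_norm_det_blocks
    _ ≤ ∏ i, ‖(H.submatrix (Prod.mk i) (Prod.mk i)).det‖ :=
        Finset.prod_le_prod (fun _ _ => norm_nonneg _) fun i _ => by
          rw [← realPart_submatrix]
          exact (hsect.submatrix (Prod.mk_right_injective i)).norm_det_realPart_le
    _ ≤ _ := by
        simpa using Real.prod_le_arith_mean_pow
          (fun i => ‖(H.submatrix (Prod.mk i) (Prod.mk i)).det‖) fun i => norm_nonneg _

/-- Theorem 2.6 (second inequality): ((Σ|det H_{i,i}|)/n)^n ≥ (cos α)^{nk}|det H|. -/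
theorem stmt10 {n k : ℕ} (hn : 0 < n) (hk : 0 < k) {α : ℝ}
    (hα0 : 0 ≤ α) (hα : α < Real.pi / 2)
    (H : Matrix (Fin n × Fin k) (Fin n × Fin k) ℂ)
    (hH : numRange H ⊆ sector α) :
    ((∑ i : Fin n, ‖(Matrix.of fun l m : Fin k => H (i, l) (i, m)).det‖) / n) ^ n ≥
      Real.cos α ^ (n * k) * ‖H.det‖ :=
  stmt10_general hn hα0 hα H hH
end
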